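/- Suppose S_n → ∞ almost surely. Then for every x ≥ 0 and every n ∈ ℕ_0, P{ρ(x) = n} = ∫_{(-∞, x]} P{inf_{k ≥ 1} S_k > x - y} P{S_n ∈ dy}; in particular P{ρ(x) = n} ≤ P{S_n ≤ x}. Moreover, for every a > 0 and x ≥ 0, E[e^{a τ(x)}] = 1 + (e^a - 1) Σ_{n ≥ 0} e^{an} P{max_{0 ≤ k ≤ n} S_k ≤ x} (both sides possibly infinite). -/

import Mathlib

open MeasureTheory ProbabilityTheory Filter Set
open scoped ENNReal Topology

noncomputable section

/-- Partial sums of the increment sequence: the zero-delayed random walk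
`S_0 = 0`, `S_n = X_0 + ⋯ + X_{n-1}`. -/
def rwS {Ω : Type*} (X : ℕ → Ω → ℝ) (n : ℕ) (ω : Ω) : ℝ := ∑ i ∈ Finset.range n, X i ω

/-- First passage time `τ(x) = inf {n ∈ ℕ₀ : S_n > x}` into `(x, ∞)`,
with value `⊤` if the walk never exceeds `x`. -/
def firstPassage {Ω : Type*} (X : ℕ → Ω → ℝ) (x : ℝ) (ω : Ω) : ℕ∞ :=
  ⨅ (n : ℕ) (_ : x < rwS X n ω), (n : ℕ∞)

/-- Number of visits `N(x) = #{n ∈ ℕ : S_n ≤ x}` of the walk (after time 0) to `(-∞, x]`. -/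
def numVisits {Ω : Type*} (X : ℕ → Ω → ℝ) (x : ℝ) (ω : Ω) : ℕ∞ :=
  {n : ℕ | 1 ≤ n ∧ rwS X n ω ≤ x}.encard

/-- Last exit time `ρ(x)` from `(-∞, x]`: it is `sup {n ∈ ℕ : S_n ≤ x}` if
`inf_{n ≥ 1} S_n ≤ x` (the infimum taken in the extended reals), and `0` otherwise. -/
def lastExit {Ω : Type*} (X : ℕ → Ω → ℝ) (x : ℝ) (ω : Ω) : ℕ∞ :=
  if (⨅ (n : ℕ) (_ : 1 ≤ n), (rwS X n ω : EReal)) ≤ (x : EReal) then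
    ⨆ (n : ℕ) (_ : 1 ≤ n ∧ rwS X n ω ≤ x), (n : ℕ∞)
  else 0

/-- `e^{a n}` for `n : ℕ∞`, equal to `∞` when `n = ∞`. -/
def eexp (a : ℝ) (n : ℕ∞) : ℝ≥0∞ :=
  if n = ⊤ then ⊤ else ENNReal.ofReal (Real.exp (a * n.toNat))

/-- Exponential moment `E[e^{a T}]` (with values in `[0,∞]`) of an `ℕ∞`-valued random time. -/
def expMoment {Ω : Type*} [MeasurableSpace Ω] (P : Measure Ω) (a : ℝ) (T : Ω → ℕ∞) : ℝ≥0∞ :=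
  ∫⁻ ω, eexp a (T ω) ∂P

/-- Laplace transform `φ(t) = E e^{-tY}` with values in `[0,∞]`. -/
def laplace {Ω : Type*} [MeasurableSpace Ω] (P : Measure Ω) (Y : Ω → ℝ) (t : ℝ) : ℝ≥0∞ :=
  ∫⁻ ω, ENNReal.ofReal (Real.exp (-t * Y ω)) ∂P

/-- `R := -log inf_{t ≥ 0} E e^{-tY}`. -/
def Rconst {Ω : Type*} [MeasurableSpace Ω] (P : Measure Ω) (Y : Ω → ℝ) : ℝ :=
  -Real.log (⨅ t ∈ Set.Ici (0:ℝ), laplace P Y t).toReal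

/-- The law of `Y` under `P` is concentrated on the lattice `l·ℤ`. -/
def ConcOnLattice {Ω : Type*} [MeasurableSpace Ω] (P : Measure Ω) (Y : Ω → ℝ) (l : ℝ) : Prop :=
  P {ω | ∃ k : ℤ, Y ω = l * k} = 1

/-- The law of `Y` under `P` is non-lattice: it is not concentrated on any lattice `l·ℤ`, `l > 0`. -/
def NonLattice {Ω : Type*} [MeasurableSpace Ω] (P : Measure Ω) (Y : Ω → ℝ) : Prop :=
  ¬ ∃ l > (0:ℝ), ConcOnLattice P Y l

/-- The law of `Y` under `P` is lattice with span `l`: it is concentrated on `l·ℤ` and `l` is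
maximal with this property. -/
def LatticeSpan {Ω : Type*} [MeasurableSpace Ω] (P : Measure Ω) (Y : Ω → ℝ) (l : ℝ) : Prop :=
  0 < l ∧ ConcOnLattice P Y l ∧ ∀ l' > (0:ℝ), ConcOnLattice P Y l' → l' ≤ l

/-- The mean `E_γ[S_τ] = E[S_τ e^{aτ} e^{-γ S_τ}]` of `S_τ` under the exponentially tilted
measure, computed in `[0,∞]` (here `τ = τ(0)`; on `{τ = ∞}` the integrand is read as `0`). -/
def tiltedMeanStau {Ω : Type*} [MeasurableSpace Ω] (P : Measure Ω) (X : ℕ → Ω → ℝ)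
    (a γ : ℝ) : ℝ≥0∞ :=
  ∫⁻ ω, ENNReal.ofReal (rwS X (firstPassage X 0 ω).toNat ω *
    Real.exp (a * ((firstPassage X 0 ω).toNat : ℝ)) *
    Real.exp (-γ * rwS X (firstPassage X 0 ω).toNat ω)) ∂P

/-!
On `{ρ(x) = n}` the walk is at or below `x` at time `n` and strictly above `x` at every later
time, i.e. `S_n ≤ x` and `S_{n+k} - S_n > x - S_n` for all `k ≥ 1`. The increments after time `n`
are independent of `S_n` and form a walk with the same law as `(S_k)`, so conditioning on `S_n`
gives the integral formula. Since `S_k → ∞`, the infimum of `S_k` over `k ≥ 1` is attained, so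
`S_k > z` for all `k ≥ 1` is the same as `inf_{k ≥ 1} S_k > z` almost surely.

For the first passage time, `e^{aτ} = 1 + (e^a - 1) ∑_{n < τ} e^{an}` (a telescoping geometric sum,
infinite when `τ = ∞`), and `n < τ(x)` exactly when `max_{k ≤ n} S_k ≤ x`; integrate termwise.
-/

section Walk

variable {Ω : Type*} {X : ℕ → Ω → ℝ} {x : ℝ} {ω : Ω}

lemma rwS_add (n k : ℕ) :
    rwS X (n + k) ω = rwS X n ω + rwS (fun i => X (n + i)) k ω :=
  Finset.sum_range_add _ n k

lemma measurable_rwS [MeasurableSpace Ω] (hmeas : ∀ i, Measurable (X i)) (n : ℕ) :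
    Measurable (rwS X n) :=
  Finset.measurable_sum _ fun i _ => hmeas i

lemma ENat.iSup_natCast_eq_iff {p : ℕ → Prop} (hp : ∃ m, p m) {n : ℕ} :
    (⨆ (m : ℕ) (_ : p m), (m : ℕ∞)) = n ↔ p n ∧ ∀ m, p m → m ≤ n := by
  constructor
  · intro h
    have hle : ∀ m, p m → m ≤ n := fun m hm => by
      exact_mod_cast h ▸ le_iSup₂ (f := fun m (_ : p m) => (m : ℕ∞)) m hm
    have hbdd : BddAbove {m | p m} := ⟨n, hle⟩
    have hsup : sSup {m | p m} = n := by exact_mod_cast (ENat.natCast_sSup hbdd).trans h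
    exact ⟨hsup ▸ Nat.sSup_mem hp hbdd, hle⟩
  · rintro ⟨hn, hle⟩
    exact le_antisymm (iSup₂_le fun m hm => by exact_mod_cast hle m hm)
      (le_iSup₂ (f := fun m (_ : p m) => (m : ℕ∞)) n hn)

lemma lastExit_eq_iSup :
    lastExit X x ω = ⨆ (m : ℕ) (_ : rwS X m ω ≤ x), (m : ℕ∞) := by
  unfold lastExit
  split_ifs with h
  · refine le_antisymm (iSup₂_le fun m hm => ?_) (iSup₂_le fun m hm => ?_)
    · exact le_iSup₂ (f := fun m (_ : rwS X m ω ≤ x) => (m : ℕ∞)) m hm.2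
    rcases Nat.eq_zero_or_pos m with rfl | hm0
    · exact bot_le
    exact le_iSup₂ (f := fun m (_ : 1 ≤ m ∧ rwS X m ω ≤ x) => (m : ℕ∞)) m ⟨hm0, hm⟩
  · refine (nonpos_iff_eq_zero.mp (iSup₂_le fun m hm => ?_)).symm
    by_contra hm0
    exact h ((iInf₂_le m (by norm_cast at hm0; omega)).trans
      (EReal.coe_le_coe_iff.mpr hm))

lemma lastExit_eq_natCast_iff (hx : 0 ≤ x) {n : ℕ} :
    lastExit X x ω = n ↔ rwS X n ω ≤ x ∧ ∀ k, 1 ≤ k → x < rwS X (n + k) ω := by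
  have hS0 : rwS X 0 ω ≤ x := by simpa [rwS] using hx
  rw [lastExit_eq_iSup, ENat.iSup_natCast_eq_iff ⟨0, hS0⟩]
  refine and_congr_right fun _ => ⟨fun h k hk => ?_, fun h m hm => ?_⟩
  · exact lt_of_not_ge fun hle => by have := h _ hle; omega
  · by_contra hnm
    have := h (m - n) (by omega)
    rw [Nat.add_sub_cancel' (by omega)] at this
    exact this.not_ge hm

lemma lt_firstPassage_iff {n : ℕ} :
    (n : ℕ∞) < firstPassage X x ω ↔ ∀ k ≤ n, rwS X k ω ≤ x := by
  rw [← ENat.add_one_le_iff (ENat.natCast_ne_top n), firstPassage, le_iInf₂_iff]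
  refine ⟨fun h k hk => not_lt.mp fun hxk => ?_, fun h k hxk => ?_⟩
  · have := h k hxk
    norm_cast at this
    omega
  · have : n < k := lt_of_not_ge fun hkn => (h k hkn).not_gt hxk
    exact_mod_cast this

lemma EReal.coe_lt_iInf_iff_of_tendsto_atTop {f : ℕ → ℝ} (hf : Tendsto f atTop atTop) (z : ℝ) :
    (z : EReal) < ⨅ (k : ℕ) (_ : 1 ≤ k), (f k : EReal) ↔ ∀ k, 1 ≤ k → z < f k := by
  refine ⟨fun h k hk => EReal.coe_lt_coe_iff.mp (h.trans_le (iInf₂_le k hk)), fun h => ?_⟩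
  obtain ⟨k₀, hk₀⟩ :=
    (Nat.cofinite_eq_atTop ▸ (tendsto_add_atTop_iff_nat 1).mpr hf).exists_forall_le
  calc (z : EReal) < f (k₀ + 1) := EReal.coe_lt_coe_iff.mpr (h _ (Nat.le_add_left 1 k₀))
    _ ≤ _ := le_iInf₂ fun k hk => by
      obtain ⟨j, rfl⟩ := Nat.exists_eq_add_of_le' hk
      exact EReal.coe_le_coe_iff.mpr (hk₀ j)

end Walk

namespace ProbabilityTheory

variable {Ω : Type*} [MeasurableSpace Ω] {P : Measure Ω}

lemma IndepFun.measure_setOf_mem_eq_setLIntegral {β γ : Type*} [MeasurableSpace β]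
    [MeasurableSpace γ] [IsFiniteMeasure P] {F : Ω → β} {G : Ω → γ} (hFG : IndepFun F G P)
    (hF : Measurable F) (hG : Measurable G) {s : Set β} (hs : MeasurableSet s) {C : β → Set γ}
    (hC : MeasurableSet {p : β × γ | p.2 ∈ C p.1}) :
    P {ω | F ω ∈ s ∧ G ω ∈ C (F ω)} = ∫⁻ y in s, P (G ⁻¹' C y) ∂(P.map F) := by
  have hset : {ω | F ω ∈ s ∧ G ω ∈ C (F ω)} =
      (fun ω => (F ω, G ω)) ⁻¹' ({p : β × γ | p.2 ∈ C p.1} ∩ s ×ˢ univ) := by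
    ext ω
    simp [and_comm]
  rw [hset, ← Measure.map_apply (hF.prodMk hG) (hC.inter (hs.prod .univ)),
    (indepFun_iff_map_prod_eq_prod_map_map hF.aemeasurable hG.aemeasurable).mp hFG,
    ← Measure.restrict_apply' (hs.prod .univ), ← Measure.restrict_prod_eq_prod_univ,
    Measure.prod_apply hC]
  refine lintegral_congr fun y => ?_
  exact Measure.map_apply hG (measurable_prodMk_left hC)

variable {X : ℕ → Ω → ℝ}

lemma iIndepFun.map_shift_eq [IsProbabilityMeasure P] (hmeas : ∀ i, Measurable (X i))
    (hindep : iIndepFun X P) (hident : ∀ i, P.map (X i) = P.map (X 0)) (n : ℕ) :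
    P.map (fun ω i => X (n + i) ω) = P.map (fun ω i => X i ω) := by
  rw [(hindep.precomp (add_right_injective n)).map_fun_eq_infinitePi_map fun i => hmeas _,
    hindep.map_fun_eq_infinitePi_map hmeas]
  simp only [hident]

lemma iIndepFun.indepFun_rwS_shift (hmeas : ∀ i, Measurable (X i)) (hindep : iIndepFun X P)
    (n : ℕ) : IndepFun (rwS X n) (fun ω i => X (n + i) ω) P := by
  let 𝓕 : ℕ → MeasurableSpace Ω := fun i => MeasurableSpace.comap (X i) inferInstance
  have hpast : Measurable[⨆ i ∈ Set.Iio n, 𝓕 i] (rwS X n) :=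
    Finset.measurable_sum _ fun i hi => Measurable.of_comap_le
      (le_biSup 𝓕 (Set.mem_Iio.mpr (Finset.mem_range.mp hi)))
  have hfuture : Measurable[⨆ i ∈ Set.Ici n, 𝓕 i] (fun ω i => X (n + i) ω) :=
    @measurable_pi_lambda _ _ _ (⨆ i ∈ Set.Ici n, 𝓕 i) _ _ fun i => Measurable.of_comap_le
      (le_biSup 𝓕 (Set.mem_Ici.mpr (Nat.le_add_right n i)))
  exact indep_of_indep_of_le_right (indep_of_indep_of_le_left
    (indep_iSup_of_disjoint (fun i => (hmeas i).comap_le) hindep (Set.Iio_disjoint_Ici le_rfl))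
    hpast.comap_le) hfuture.comap_le

end ProbabilityTheory

section LastExit

variable {Ω : Type*} [MeasurableSpace Ω] {P : Measure Ω} [IsProbabilityMeasure P]
  {X : ℕ → Ω → ℝ}

lemma measure_lastExit_eq_natCast (hmeas : ∀ i, Measurable (X i)) (hindep : iIndepFun X P)
    (hident : ∀ i, P.map (X i) = P.map (X 0))
    (hdrift : ∀ᵐ ω ∂P, Tendsto (fun n => rwS X n ω) atTop atTop) {x : ℝ} (hx : 0 ≤ x) (n : ℕ) :
    P {ω | lastExit X x ω = n} =
      ∫⁻ y in Iic x, P {ω | ((x - y : ℝ) : EReal) < ⨅ (k : ℕ) (_ : 1 ≤ k), (rwS X k ω : EReal)}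
        ∂(P.map (rwS X n)) := by
  let W : ℝ → Set (ℕ → ℝ) := fun z => {ξ | ∀ k, 1 ≤ k → z < ∑ i ∈ Finset.range k, ξ i}
  have hW : MeasurableSet {p : ℝ × (ℕ → ℝ) | p.2 ∈ W (x - p.1)} :=
    measurableSet_setOfPred.mpr (by simp only [W, mem_ofPred_eq]; fun_prop)
  have hWz (z : ℝ) : MeasurableSet (W z) := measurableSet_setOfPred.mpr (by fun_prop)
  have hshift (m : ℕ) : Measurable (fun ω i => X (m + i) ω) :=
    measurable_pi_lambda _ fun i => hmeas _
  have hset : {ω | lastExit X x ω = n} =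
      {ω | rwS X n ω ∈ Iic x ∧ (fun i => X (n + i) ω) ∈ W (x - rwS X n ω)} := by
    ext ω
    simp only [mem_ofPred_eq, lastExit_eq_natCast_iff hx, rwS_add, mem_Iic, W, sub_lt_iff_lt_add']
    rfl
  rw [hset, (hindep.indepFun_rwS_shift hmeas n).measure_setOf_mem_eq_setLIntegral
    (C := fun y => W (x - y)) (measurable_rwS hmeas n) (hshift n) measurableSet_Iic hW]
  refine lintegral_congr fun y => ?_
  rw [← Measure.map_apply (hshift n) (hWz _), hindep.map_shift_eq hmeas hident,
    Measure.map_apply (by simpa using hshift 0) (hWz _)]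
  exact measure_congr <| hdrift.mono fun ω hω =>
    propext (EReal.coe_lt_iInf_iff_of_tendsto_atTop hω (x - y)).symm

end LastExit

lemma ofReal_exp_mul_eq_one_add_geom_sum {a : ℝ} (ha : 0 ≤ a) (m : ℕ) :
    ENNReal.ofReal (Real.exp (a * m)) =
      1 + ENNReal.ofReal (Real.exp a - 1) *
        ∑ n ∈ Finset.range m, ENNReal.ofReal (Real.exp (a * n)) := by
  have h1 : 0 ≤ Real.exp a - 1 := by linarith [Real.add_one_le_exp a]
  induction m with
  | zero => simp
  | succ m ih =>
    rw [Finset.sum_range_succ, mul_add, ← add_assoc, ← ih, ← ENNReal.ofReal_mul h1,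
      ← ENNReal.ofReal_add (Real.exp_nonneg _) (mul_nonneg h1 (Real.exp_nonneg _)), Nat.cast_succ,
      mul_add_one, Real.exp_add]
    ring_nf

lemma eexp_eq_one_add_tsum {a : ℝ} (ha : 0 < a) (t : ℕ∞) :
    eexp a t = 1 + ENNReal.ofReal (Real.exp a - 1) *
      ∑' n : ℕ, if (n : ℕ∞) < t then ENNReal.ofReal (Real.exp (a * n)) else 0 := by
  cases t with
  | top =>
    have hsum : ∑' n : ℕ, (if (n : ℕ∞) < ⊤ then ENNReal.ofReal (Real.exp (a * n)) else 0) = ⊤ :=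
      top_le_iff.mp <| (ENNReal.tsum_const_eq_top_of_ne_zero one_ne_zero).symm.le.trans <|
        ENNReal.tsum_le_tsum fun n => by
          simpa using Real.one_le_exp (by positivity : 0 ≤ a * n)
    rw [hsum, ENNReal.mul_top (by simpa using ha)]
    simp [eexp]
  | coe m =>
    have hsum : ∑' n : ℕ, (if (n : ℕ∞) < m then ENNReal.ofReal (Real.exp (a * n)) else 0) =
        ∑ n ∈ Finset.range m, ENNReal.ofReal (Real.exp (a * n)) := by
      rw [tsum_eq_sum (s := Finset.range m) fun n hn => by simp_all, ← Finset.sum_filter]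
      congr 1
      ext n
      simp
    rw [hsum, ← ofReal_exp_mul_eq_one_add_geom_sum ha.le]
    simp [eexp]

lemma expMoment_firstPassage_eq {Ω : Type*} [MeasurableSpace Ω] {P : Measure Ω}
    [IsProbabilityMeasure P] {X : ℕ → Ω → ℝ} (hmeas : ∀ i, Measurable (X i)) {a : ℝ} (ha : 0 < a)
    (x : ℝ) :
    expMoment P a (firstPassage X x) =
      1 + ENNReal.ofReal (Real.exp a - 1) *
        ∑' n : ℕ, ENNReal.ofReal (Real.exp (a * n)) * P {ω | ∀ k ≤ n, rwS X k ω ≤ x} := by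
  let A : ℕ → Set Ω := fun n => {ω | ∀ k ≤ n, rwS X k ω ≤ x}
  have hA (n : ℕ) : MeasurableSet (A n) := by
    have := measurable_rwS hmeas
    exact measurableSet_setOfPred.mpr (by fun_prop)
  have hpoint (ω : Ω) : eexp a (firstPassage X x ω) = 1 + ENNReal.ofReal (Real.exp a - 1) *
      ∑' n : ℕ, (A n).indicator (fun _ => ENNReal.ofReal (Real.exp (a * n))) ω := by
    simp only [eexp_eq_one_add_tsum ha, indicator_apply, A, mem_ofPred_eq, lt_firstPassage_iff]
  simp only [expMoment, hpoint]
  rw [lintegral_add_left measurable_const, lintegral_const, measure_univ, mul_one,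
    lintegral_const_mul' _ _ ENNReal.ofReal_ne_top,
    lintegral_tsum fun n => (measurable_const.indicator (hA n)).aemeasurable]
  simp only [lintegral_indicator_const (hA _)]
  rfl

/-- If `S_n → ∞` a.s., then for every `x ≥ 0` and `n ∈ ℕ₀`,
`P{ρ(x) = n} = ∫_{(-∞,x]} P{inf_{k≥1} S_k > x - y} P{S_n ∈ dy}`, and in particular
`P{ρ(x) = n} ≤ P{S_n ≤ x}`. Moreover, for every `a > 0` and `x ≥ 0`,
`E e^{aτ(x)} = 1 + (e^a - 1) Σ_{n≥0} e^{an} P{max_{0≤k≤n} S_k ≤ x}`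
(both sides possibly infinite). -/
theorem lastExit_distribution_and_firstPassage_series
    {Ω : Type*} [MeasurableSpace Ω] (P : Measure Ω) [IsProbabilityMeasure P]
    (X : ℕ → Ω → ℝ) (hmeas : ∀ i, Measurable (X i))
    (hindep : iIndepFun X P)
    (hident : ∀ i, P.map (X i) = P.map (X 0))
    (hdrift : ∀ᵐ ω ∂P, Tendsto (fun n => rwS X n ω) atTop atTop) :
    (∀ x ≥ (0:ℝ), ∀ n : ℕ,
      P {ω | lastExit X x ω = (n : ℕ∞)} =
        ∫⁻ y in Set.Iic x,
          P {ω | ((x - y : ℝ) : EReal) < ⨅ (k : ℕ) (_ : 1 ≤ k), (rwS X k ω : EReal)}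
          ∂(P.map (rwS X n))) ∧
    (∀ x ≥ (0:ℝ), ∀ n : ℕ,
      P {ω | lastExit X x ω = (n : ℕ∞)} ≤ P {ω | rwS X n ω ≤ x}) ∧
    (∀ a > (0:ℝ), ∀ x ≥ (0:ℝ),
      expMoment P a (firstPassage X x) =
        1 + ENNReal.ofReal (Real.exp a - 1) *
          ∑' n : ℕ, ENNReal.ofReal (Real.exp (a * n)) * P {ω | ∀ k ≤ n, rwS X k ω ≤ x}) :=
  ⟨fun _ hx n => measure_lastExit_eq_natCast hmeas hindep hident hdrift hx n,
    fun _ hx _ => measure_mono fun _ h => ((lastExit_eq_natCast_iff hx).mp h).1,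
    fun _ ha x _ => expMoment_firstPassage_eq hmeas ha x⟩
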